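/- arXiv:2304.05487 — 3 statements merged into one kernel-verified Lean document; each statement's English description precedes it below -/
import Mathlib

section
/- Let (λ_{n})_{n≥1} and (μ_n)_{n≥1} be complex sequences with λ_n = (n + 1/2 + δ_n)² and μ_n = (n+1/2)², where Σ|δ_n| < ∞ and λ_n ≠ μ_m for all n,m. Fix δ > 0. Then the meromorphic function F(λ) = ∏_{n≥1} (λ_n − λ)/(μ_n − λ) converges locally uniformly away from the poles, and there is a constant C_δ such that |F(ρ²)| ≤ C_δ for all complex ρ with |ρ ± (n+1/2)| ≥ δ for every n. -/
open Filter

noncomputable section BlaschkeAux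

/-- Auxiliary term of the Blaschke-type product, with harmless value `1` at `n = 0`. -/
def bTerm (lam : ℕ → ℂ) (l : ℂ) (n : ℕ) : ℂ :=
  if n = 0 then 1 else (lam n - l) / (((n : ℂ) + 1 / 2) ^ 2 - l)

lemma bTerm_zero (lam : ℕ → ℂ) (l : ℂ) : bTerm lam l 0 = 1 := rfl

lemma bTerm_of_pos (lam : ℕ → ℂ) (l : ℂ) {n : ℕ} (hn : 1 ≤ n) :
    bTerm lam l n = (lam n - l) / (((n : ℂ) + 1 / 2) ^ 2 - l) := by
  simp [bTerm, Nat.one_le_iff_ne_zero.mp hn]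

lemma norm_half (n : ℕ) : ‖(n : ℂ) + 1 / 2‖ = (n : ℝ) + 1 / 2 := by
  rw [show (n : ℂ) + 1 / 2 = (((n : ℝ) + 1 / 2 : ℝ) : ℂ) by push_cast; ring,
    Complex.norm_real, Real.norm_eq_abs, abs_of_nonneg (by positivity)]

lemma prod_range_succ_eq_Icc (g : ℕ → ℂ) (hg0 : g 0 = 1) (N : ℕ) :
    ∏ n ∈ Finset.range (N + 1), g n = ∏ n ∈ Finset.Icc 1 N, g n := by
  rw [Finset.range_eq_Ico, Finset.prod_eq_prod_Ico_succ_bot (Nat.succ_pos N), hg0, one_mul,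
    Nat.succ_eq_add_one, Finset.Ico_add_one_right_eq_Icc]

lemma bTerm_sub_one_summable (lam d : ℕ → ℂ) (hd : Summable fun n => ‖d n‖)
    (hlam : ∀ n : ℕ, 1 ≤ n → lam n = ((n : ℂ) + 1 / 2 + d n) ^ 2) (l : ℂ)
    (hl : ∀ n : ℕ, 1 ≤ n → l ≠ ((n : ℂ) + 1 / 2) ^ 2) :
    Summable fun n => ‖bTerm lam l n - 1‖ := by
  set D := ∑' n, ‖d n‖ with hD
  have hDn : ∀ n, ‖d n‖ ≤ D := fun n => Summable.le_tsum hd n fun j _ => norm_nonneg _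
  have hD0 : 0 ≤ D := tsum_nonneg fun n => norm_nonneg _
  apply Summable.of_norm_bounded_eventually_nat (g := fun n => (3 + D) * ‖d n‖) (hd.mul_left _)
  filter_upwards [eventually_ge_atTop (⌈‖l‖⌉₊ + 1)] with n hn
  have hn1 : 1 ≤ n := le_trans (Nat.le_add_left 1 _) hn
  have hn1' : (1 : ℝ) ≤ (n : ℝ) := by exact_mod_cast hn1
  have hnl : ‖l‖ ≤ (n : ℝ) := by
    refine le_trans (Nat.le_ceil _) ?_
    exact_mod_cast le_trans (Nat.le_succ _) hn
  have hμ : ((n : ℂ) + 1 / 2) ^ 2 - l ≠ 0 := sub_ne_zero.mpr fun e => hl n hn1 e.symm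
  have hid : bTerm lam l n - 1 =
      (d n * (2 * ((n : ℂ) + 1 / 2) + d n)) / (((n : ℂ) + 1 / 2) ^ 2 - l) := by
    rw [bTerm_of_pos _ _ hn1, hlam n hn1, div_sub_one hμ]
    ring_nf
  rw [norm_norm, hid, norm_div]
  have hden : (n : ℝ) ≤ ‖((n : ℂ) + 1 / 2) ^ 2 - l‖ := by
    have h1 : ‖((n : ℂ) + 1 / 2) ^ 2‖ - ‖l‖ ≤ ‖((n : ℂ) + 1 / 2) ^ 2 - l‖ :=
      norm_sub_norm_le _ _
    have h2 : ‖((n : ℂ) + 1 / 2) ^ 2‖ = ((n : ℝ) + 1 / 2) ^ 2 := by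
      rw [norm_pow, norm_half]
    nlinarith
  have hnum : ‖d n * (2 * ((n : ℂ) + 1 / 2) + d n)‖ ≤ ‖d n‖ * (2 * (n : ℝ) + 1 + D) := by
    rw [norm_mul]
    refine mul_le_mul_of_nonneg_left ?_ (norm_nonneg _)
    calc ‖2 * ((n : ℂ) + 1 / 2) + d n‖ ≤ ‖(2 : ℂ) * ((n : ℂ) + 1 / 2)‖ + ‖d n‖ :=
          norm_add_le _ _
      _ ≤ 2 * (n : ℝ) + 1 + D := by
          rw [norm_mul, norm_half, Complex.norm_ofNat]
          have := hDn n
          linarith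
  have hpos : (0 : ℝ) < (n : ℝ) := by linarith
  calc ‖d n * (2 * ((n : ℂ) + 1 / 2) + d n)‖ / ‖((n : ℂ) + 1 / 2) ^ 2 - l‖
      ≤ (‖d n‖ * (2 * (n : ℝ) + 1 + D)) / (n : ℝ) :=
        div_le_div₀ (by positivity) hnum hpos hden
    _ ≤ (3 + D) * ‖d n‖ := by
        rw [div_le_iff₀ hpos]
        nlinarith [norm_nonneg (d n), mul_nonneg (mul_nonneg (sub_nonneg.mpr hn1')
          (by linarith : (0:ℝ) ≤ 1 + D)) (norm_nonneg (d n))]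

end BlaschkeAux

/-- Boundedness of the Blaschke-type factor `F(λ) = ∏_{n≥1} (λ_n − λ)/(μ_n − λ)` with
`λ_n = (n + 1/2 + δ_n)²`, `μ_n = (n + 1/2)²`, `Σ‖δ_n‖ < ∞`: the product converges
locally uniformly away from the poles, and `‖F(ρ²)‖ ≤ C_δ` whenever
`|ρ ± (n+1/2)| ≥ δ` for all `n ≥ 1`. -/
theorem stmt_9 (lam d : ℕ → ℂ)
    (hd : Summable fun n => ‖d n‖)
    (hlam : ∀ n : ℕ, 1 ≤ n → lam n = ((n : ℂ) + 1 / 2 + d n) ^ 2)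
    (hne : ∀ n m : ℕ, 1 ≤ n → 1 ≤ m → lam n ≠ ((m : ℂ) + 1 / 2) ^ 2)
    (δ : ℝ) (hδ : 0 < δ) :
    ∃ F : ℂ → ℂ,
      (∀ l : ℂ, (∀ n : ℕ, 1 ≤ n → l ≠ ((n : ℂ) + 1 / 2) ^ 2) →
        Tendsto (fun N : ℕ =>
            ∏ n ∈ Finset.Icc 1 N, (lam n - l) / (((n : ℂ) + 1 / 2) ^ 2 - l))
          atTop (nhds (F l))) ∧
      ∃ C : ℝ, ∀ ρ : ℂ,
        (∀ n : ℕ, 1 ≤ n →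
          δ ≤ ‖ρ - (((n : ℂ) + 1 / 2))‖ ∧ δ ≤ ‖ρ + (((n : ℂ) + 1 / 2))‖) →
        ‖F (ρ ^ 2)‖ ≤ C := by
  classical
  set F : ℂ → ℂ := fun l =>
    if _ : ∃ m : ℕ, 1 ≤ m ∧ lam m = l then 0 else ∏' n, bTerm lam l n with hF
  -- partial products over `Icc 1 N` coincide with partial products of `bTerm` over `range (N+1)`
  have hprod : ∀ (l : ℂ) (N : ℕ),
      ∏ n ∈ Finset.Icc 1 N, (lam n - l) / (((n : ℂ) + 1 / 2) ^ 2 - l) =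
        ∏ n ∈ Finset.range (N + 1), bTerm lam l n := by
    intro l N
    rw [prod_range_succ_eq_Icc _ (bTerm_zero lam l)]
    exact Finset.prod_congr rfl fun n hn =>
      (bTerm_of_pos lam l (Finset.mem_Icc.mp hn).1).symm
  -- the convergence statement
  have key : ∀ l : ℂ, (∀ n : ℕ, 1 ≤ n → l ≠ ((n : ℂ) + 1 / 2) ^ 2) →
      Tendsto (fun N : ℕ =>
          ∏ n ∈ Finset.Icc 1 N, (lam n - l) / (((n : ℂ) + 1 / 2) ^ 2 - l))
        atTop (nhds (F l)) := by
    intro l hl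
    by_cases h : ∃ m : ℕ, 1 ≤ m ∧ lam m = l
    · rw [hF]
      simp only [dif_pos h]
      obtain ⟨m, hm1, hm2⟩ := h
      refine Tendsto.congr' ?_ tendsto_const_nhds
      filter_upwards [eventually_ge_atTop m] with N hN
      refine (Finset.prod_eq_zero (Finset.mem_Icc.mpr ⟨hm1, hN⟩) ?_).symm
      rw [hm2, sub_self, zero_div]
    · rw [hF]
      simp only [dif_neg h]
      push_neg at h
      have hne0 : ∀ n, bTerm lam l n ≠ 0 := by
        intro n
        rcases Nat.eq_zero_or_pos n with rfl | hn
        · simp [bTerm]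
        · rw [bTerm_of_pos _ _ hn]
          exact div_ne_zero (sub_ne_zero.mpr (h n hn))
            (sub_ne_zero.mpr fun e => hl n hn e.symm)
      have hs : Summable fun n => ‖bTerm lam l n - 1‖ :=
        bTerm_sub_one_summable lam d hd hlam l hl
      have hev : ∀ᶠ n in atTop, ‖bTerm lam l n - 1‖ ≤ 1 / 2 :=
        hs.tendsto_atTop_zero.eventually (eventually_le_nhds (by norm_num))
      have hlog : Summable fun n => Complex.log (bTerm lam l n) := by
        apply Summable.of_norm
        apply Summable.of_norm_bounded_eventually_nat
          (g := fun n => 3 / 2 * ‖bTerm lam l n - 1‖) (hs.mul_left _)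
        filter_upwards [hev] with n hn
        rw [norm_norm]
        have e : bTerm lam l n = 1 + (bTerm lam l n - 1) := by ring
        nth_rewrite 1 [e]
        exact Complex.norm_log_one_add_half_le_self hn
      have hp : HasProd (bTerm lam l) (∏' n, bTerm lam l n) :=
        by have := Complex.hasProd_of_hasSum_log hne0 hlog.hasSum; rwa [this.tprod_eq]
      have h1 := hp.tendsto_prod_nat
      have h2 := h1.comp (tendsto_add_atTop_nat 1)
      exact h2.congr fun N => (hprod l N).symm
  refine ⟨F, key, Real.exp ((2 / δ) * ∑' n, ‖d n‖), ?_⟩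
  intro ρ hρ
  -- `ρ²` avoids the poles
  have hl : ∀ n : ℕ, 1 ≤ n → ρ ^ 2 ≠ ((n : ℂ) + 1 / 2) ^ 2 := by
    intro n hn e
    obtain ⟨h1, h2⟩ := hρ n hn
    have h0 : (((n : ℂ) + 1 / 2) - ρ) * (((n : ℂ) + 1 / 2) + ρ) = 0 := by
      rw [show (((n : ℂ) + 1 / 2) - ρ) * (((n : ℂ) + 1 / 2) + ρ) =
        ((n : ℂ) + 1 / 2) ^ 2 - ρ ^ 2 from by ring, ← e, sub_self]
    rcases mul_eq_zero.mp h0 with h | h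
    · rw [norm_sub_rev] at h1
      rw [h, norm_zero] at h1; linarith
    · rw [add_comm] at h
      rw [h, norm_zero] at h2; linarith
  have ht := (key (ρ ^ 2) hl).norm
  refine le_of_tendsto ht (Eventually.of_forall fun N => ?_)
  rw [norm_prod]
  have hterm : ∀ n ∈ Finset.Icc 1 N,
      ‖(lam n - ρ ^ 2) / (((n : ℂ) + 1 / 2) ^ 2 - ρ ^ 2)‖ ≤
        Real.exp (2 / δ * ‖d n‖) := by
    intro n hn
    have hn1 : 1 ≤ n := (Finset.mem_Icc.mp hn).1
    obtain ⟨h1, h2⟩ := hρ n hn1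
    have h1' : δ ≤ ‖((n : ℂ) + 1 / 2) - ρ‖ := by rwa [norm_sub_rev]
    have h2' : δ ≤ ‖((n : ℂ) + 1 / 2) + ρ‖ := by rwa [add_comm] at h2
    have hne1 : ((n : ℂ) + 1 / 2) - ρ ≠ 0 := by
      intro e; rw [e, norm_zero] at h1'; linarith
    have hne2 : ((n : ℂ) + 1 / 2) + ρ ≠ 0 := by
      intro e; rw [e, norm_zero] at h2'; linarith
    have hne3 : ((n : ℂ) + 1 / 2) ^ 2 - ρ ^ 2 ≠ 0 := by
      rw [show ((n : ℂ) + 1 / 2) ^ 2 - ρ ^ 2 =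
        (((n : ℂ) + 1 / 2) - ρ) * (((n : ℂ) + 1 / 2) + ρ) from by ring]
      exact mul_ne_zero hne1 hne2
    have hiden : (lam n - ρ ^ 2) / (((n : ℂ) + 1 / 2) ^ 2 - ρ ^ 2) =
        (1 + d n / (((n : ℂ) + 1 / 2) - ρ)) * (1 + d n / (((n : ℂ) + 1 / 2) + ρ)) := by
      have hrw1 : 1 + d n / (((n : ℂ) + 1 / 2) - ρ) =
          (((n : ℂ) + 1 / 2) - ρ + d n) / (((n : ℂ) + 1 / 2) - ρ) := by
        rw [add_div, div_self hne1]
      have hrw2 : 1 + d n / (((n : ℂ) + 1 / 2) + ρ) =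
          (((n : ℂ) + 1 / 2) + ρ + d n) / (((n : ℂ) + 1 / 2) + ρ) := by
        rw [add_div, div_self hne2]
      rw [hrw1, hrw2, div_mul_div_comm,
        div_eq_div_iff hne3 (mul_ne_zero hne1 hne2), hlam n hn1]
      ring
    have e1 : ‖1 + d n / (((n : ℂ) + 1 / 2) - ρ)‖ ≤ 1 + ‖d n‖ / δ := by
      refine le_trans (norm_add_le _ _) ?_
      rw [norm_one, norm_div]
      gcongr
    have e2 : ‖1 + d n / (((n : ℂ) + 1 / 2) + ρ)‖ ≤ 1 + ‖d n‖ / δ := by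
      refine le_trans (norm_add_le _ _) ?_
      rw [norm_one, norm_div]
      gcongr
    have hx : 0 ≤ ‖d n‖ / δ := by positivity
    have hexp : 1 + ‖d n‖ / δ ≤ Real.exp (‖d n‖ / δ) := by
      linarith [Real.add_one_le_exp (‖d n‖ / δ)]
    calc ‖(lam n - ρ ^ 2) / (((n : ℂ) + 1 / 2) ^ 2 - ρ ^ 2)‖
        = ‖1 + d n / (((n : ℂ) + 1 / 2) - ρ)‖ * ‖1 + d n / (((n : ℂ) + 1 / 2) + ρ)‖ := by
          rw [hiden, norm_mul]
      _ ≤ (1 + ‖d n‖ / δ) * (1 + ‖d n‖ / δ) :=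
          mul_le_mul e1 e2 (norm_nonneg _) (by positivity)
      _ ≤ Real.exp (‖d n‖ / δ) * Real.exp (‖d n‖ / δ) :=
          mul_le_mul hexp hexp (by positivity) (Real.exp_nonneg _)
      _ = Real.exp (2 / δ * ‖d n‖) := by
          rw [← Real.exp_add]; ring_nf
  calc ∏ n ∈ Finset.Icc 1 N, ‖(lam n - ρ ^ 2) / (((n : ℂ) + 1 / 2) ^ 2 - ρ ^ 2)‖
      ≤ ∏ n ∈ Finset.Icc 1 N, Real.exp (2 / δ * ‖d n‖) :=
        Finset.prod_le_prod (fun n _ => norm_nonneg _) hterm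
    _ = Real.exp (∑ n ∈ Finset.Icc 1 N, 2 / δ * ‖d n‖) := (Real.exp_sum _ _).symm
    _ ≤ Real.exp (2 / δ * ∑' n, ‖d n‖) := by
        apply Real.exp_le_exp.mpr
        rw [← Finset.mul_sum]
        exact mul_le_mul_of_nonneg_left
          (Summable.sum_le_tsum _ (fun i _ => norm_nonneg _) hd) (by positivity)
end

section
/- Let a ∈ [π/2, π), q⁻ ∈ L², and suppose q⁺ ∈ L²(a, π) satisfies, for a.e. x ∈ (a, π), the pair of equations: 2(w₁+w₀)(π+a−2x) = q⁺(x) + 2∫_x^{2x−a} q⁺(t)(∫_0^{2(t−x)} q⁻) dt + 2∫_{2x−a}^π q⁺(t)(∫_0^{2(x−a)} q⁻) dt for a < x < (a+π)/2, and 2(w₁−w₀)(2x−π−a) = q⁺(x) + 2∫_x^π q⁺(t)(∫_0^{2(t−x)} q⁻) dt for (a+π)/2 < x < π. Then q⁺ satisfies the single Volterra equation W(x) = q⁺(x) + ∫_x^π Q(x,t) q⁺(t) dt on (a,π), where W is defined piecewise as 2(w₁+w₀)(π+a−2x) on (a, (a+π)/2) and 2(w₁−w₀)(2x−π−a) on ((a+π)/2,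 π), and Q(x,t) = 2∫_0^{2(x−a)} q⁻ if t > 2x−a and Q(x,t) = 2∫_0^{2(t−x)} q⁻ if t ≤ 2x−a; consequently q⁺ is uniquely determined by w₀, w₁, q⁻. -/
open MeasureTheory Real

set_option maxHeartbeats 1000000 in
/-- Reduction in Lemma 10: if `q⁺ ∈ L²(a,π)` satisfies the pair of equations obtained
by adding/subtracting (4.14)–(4.15), then `q⁺` satisfies the single Volterra equation
`W(x) = q⁺(x) + ∫_x^π Q(x,t) q⁺(t) dt` on `(a,π)`, and is therefore uniquely
determined by `w₀, w₁, q⁻`. -/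
theorem stmt_12 (a : ℝ) (ha : a ∈ Set.Ico (π / 2) π)
    (qm w₀ w₁ : ℝ → ℂ) (hqm : MemLp qm 2 volume)
    (W : ℝ → ℂ)
    (hW : ∀ x : ℝ, W x = if x < (a + π) / 2 then 2 * (w₁ (π + a - 2 * x) + w₀ (π + a - 2 * x))
      else 2 * (w₁ (2 * x - π - a) - w₀ (2 * x - π - a)))
    (Q : ℝ → ℝ → ℂ)
    (hQ : ∀ x t : ℝ, Q x t = if t > 2 * x - a then (2 : ℂ) * ∫ τ in (0:ℝ)..(2 * (x - a)), qm τ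
      else (2 : ℂ) * ∫ τ in (0:ℝ)..(2 * (t - x)), qm τ)
    (qp : ℝ → ℂ) (hqp : MemLp qp 2 (volume.restrict (Set.Ioc a π)))
    (h1 : ∀ᵐ x ∂volume.restrict (Set.Ioo a ((a + π) / 2)),
      2 * (w₁ (π + a - 2 * x) + w₀ (π + a - 2 * x)) =
        qp x + 2 * (∫ t in x..(2 * x - a), qp t * ∫ τ in (0:ℝ)..(2 * (t - x)), qm τ) +
          2 * (∫ t in (2 * x - a)..π, qp t * ∫ τ in (0:ℝ)..(2 * (x - a)), qm τ))
    (h2 : ∀ᵐ x ∂volume.restrict (Set.Ioo ((a + π) / 2) π),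
      2 * (w₁ (2 * x - π - a) - w₀ (2 * x - π - a)) =
        qp x + 2 * ∫ t in x..π, qp t * ∫ τ in (0:ℝ)..(2 * (t - x)), qm τ) :
    (∀ᵐ x ∂volume.restrict (Set.Ioo a π),
      W x = qp x + ∫ t in x..π, Q x t * qp t) ∧
    ∀ qp' : ℝ → ℂ, MemLp qp' 2 (volume.restrict (Set.Ioc a π)) →
      (∀ᵐ x ∂volume.restrict (Set.Ioo a π),
        W x = qp' x + ∫ t in x..π, Q x t * qp' t) →
      qp' =ᵐ[volume.restrict (Set.Ioo a π)] qp := by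
  obtain ⟨ha1, ha2⟩ := ha
  have hπ : (0 : ℝ) < π := pi_pos
  haveI : IsFiniteMeasure (volume.restrict (Set.Ioc a π)) :=
    ⟨by rw [Measure.restrict_apply_univ]; exact measure_Ioc_lt_top⟩
  have hamid : a < (a + π) / 2 := by linarith
  have hmidπ : (a + π) / 2 < π := by linarith
  -- basic integrability facts for qm
  have hqmli : LocallyIntegrable qm volume := hqm.locallyIntegrable (by norm_num)
  have hqmii : ∀ u v : ℝ, IntervalIntegrable qm volume u v := fun u v =>
    (hqmli.integrableOn_isCompact isCompact_uIcc).intervalIntegrable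
  -- uniform bound on the kernel
  set K : ℝ := ∫ t in Set.Icc (-(4 * π)) (4 * π), ‖qm t‖ with hKdef
  have hK0 : 0 ≤ K := by
    rw [hKdef]; exact setIntegral_nonneg measurableSet_Icc fun _ _ => norm_nonneg _
  have hKb : ∀ s : ℝ, |s| ≤ 4 * π → ‖∫ τ in (0:ℝ)..s, qm τ‖ ≤ K := by
    intro s hs
    refine intervalIntegral.norm_integral_le_integral_norm_uIoc.trans
      (setIntegral_mono_set ((hqmli.integrableOn_isCompact isCompact_Icc).norm) ?_ ?_)
    · exact Filter.Eventually.of_forall fun _ => norm_nonneg _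
    · have hsub : Set.uIoc 0 s ⊆ Set.Icc (-(4 * π)) (4 * π) := by
        intro t ht
        obtain ⟨h1', h2'⟩ := ht
        obtain ⟨hs1, hs2⟩ := abs_le.mp hs
        constructor
        · have : min 0 s ≥ -(4 * π) := le_min (by linarith) (by linarith)
          linarith
        · have : max 0 s ≤ 4 * π := max_le (by linarith) hs2
          linarith
      exact hsub.eventuallyLE
  have hQb : ∀ x t : ℝ, a ≤ x → x ≤ t → t ≤ π → ‖Q x t‖ ≤ 2 * K := by
    intro x t hax hxt htπ
    rw [hQ]
    split_ifs with h
    · rw [norm_mul]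
      have : ‖(2:ℂ)‖ = 2 := by norm_num
      rw [this]
      have := hKb (2 * (x - a)) (by rw [abs_le]; constructor <;> nlinarith)
      nlinarith [norm_nonneg (∫ τ in (0:ℝ)..(2 * (x - a)), qm τ)]
    · rw [norm_mul]
      have : ‖(2:ℂ)‖ = 2 := by norm_num
      rw [this]
      have := hKb (2 * (t - x)) (by rw [abs_le]; constructor <;> nlinarith)
      nlinarith [norm_nonneg (∫ τ in (0:ℝ)..(2 * (t - x)), qm τ)]
  -- measurability of the kernel
  have hQmeas : ∀ x : ℝ, Measurable fun t => Q x t := by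
    intro x
    have hc : Continuous fun t : ℝ => (2:ℂ) * ∫ τ in (0:ℝ)..(2 * (t - x)), qm τ :=
      continuous_const.mul ((intervalIntegral.continuous_primitive hqmii 0).comp
        (by continuity))
    have : (fun t => Q x t) = fun t =>
        if 2 * x - a < t then (2 : ℂ) * ∫ τ in (0:ℝ)..(2 * (x - a)), qm τ
        else (2 : ℂ) * ∫ τ in (0:ℝ)..(2 * (t - x)), qm τ := by
      funext t; rw [hQ]
    rw [this]
    exact Measurable.ite (measurableSet_lt measurable_const measurable_id) measurable_const hc.measurable
  -- integrability of qp
  have hqpint : IntegrableOn qp (Set.Ioc a π) volume := hqp.integrable one_le_two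
  -- integrability of the product with the kernel
  have hprod : ∀ f : ℝ → ℂ, IntegrableOn f (Set.Ioc a π) volume →
      ∀ x : ℝ, a ≤ x → IntegrableOn (fun t => Q x t * f t) (Set.Ioc x π) volume := by
    intro f hf x hx
    have hf' : IntegrableOn f (Set.Ioc x π) volume := hf.mono_set (Set.Ioc_subset_Ioc_left hx)
    refine Integrable.bdd_mul (c := 2 * K) hf' (hQmeas x).aestronglyMeasurable ?_
    refine (ae_restrict_iff' measurableSet_Ioc).mpr
      (Filter.Eventually.of_forall fun t ht => hQb x t hx ht.1.le ht.2)
  clear_value K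
  -- Part 1: the Volterra equation
  have main : ∀ᵐ x ∂volume.restrict (Set.Ioo a π),
      W x = qp x + ∫ t in x..π, Q x t * qp t := by
    rw [ae_restrict_iff' measurableSet_Ioo]
    have h1' := (ae_restrict_iff' measurableSet_Ioo).mp h1
    have h2' := (ae_restrict_iff' measurableSet_Ioo).mp h2
    have hne : ∀ᵐ x : ℝ ∂volume, x ≠ (a + π) / 2 := by
      refine ae_iff.mpr ?_
      simpa using measure_singleton ((a + π) / 2)
    filter_upwards [h1', h2', hne] with x hx1 hx2 hxne hx
    rcases lt_or_gt_of_ne hxne with hlt | hgt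
    · -- x < (a+π)/2
      rw [hW x, if_pos hlt, hx1 ⟨hx.1, hlt⟩]
      have hb1 : x ≤ 2 * x - a := by linarith [hx.1]
      have hb2 : 2 * x - a ≤ π := by linarith
      have i1 : IntervalIntegrable (fun t => Q x t * qp t) volume x (2 * x - a) :=
        (intervalIntegrable_iff_integrableOn_Ioc_of_le hb1).mpr
          ((hprod qp hqpint x hx.1.le).mono_set (Set.Ioc_subset_Ioc_right hb2))
      have i2 : IntervalIntegrable (fun t => Q x t * qp t) volume (2 * x - a) π :=
        (intervalIntegrable_iff_integrableOn_Ioc_of_le hb2).mpr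
          ((hprod qp hqpint x hx.1.le).mono_set (Set.Ioc_subset_Ioc_left hb1))
      have hsplit := intervalIntegral.integral_add_adjacent_intervals i1 i2
      have e1 : (∫ t in x..(2 * x - a), Q x t * qp t)
          = 2 * ∫ t in x..(2 * x - a), qp t * ∫ τ in (0:ℝ)..(2 * (t - x)), qm τ := by
        rw [← intervalIntegral.integral_const_mul]
        apply intervalIntegral.integral_congr
        intro t ht
        rw [Set.uIcc_of_le hb1] at ht
        show Q x t * qp t = _
        rw [hQ, if_neg (not_lt.mpr ht.2)]
        ring
      have e2 : (∫ t in (2 * x - a)..π, Q x t * qp t)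
          = 2 * ∫ t in (2 * x - a)..π, qp t * ∫ τ in (0:ℝ)..(2 * (x - a)), qm τ := by
        rw [← intervalIntegral.integral_const_mul]
        apply intervalIntegral.integral_congr
        intro t ht
        rw [Set.uIcc_of_le hb2] at ht
        show Q x t * qp t = _
        rw [hQ]
        rcases lt_or_eq_of_le ht.1 with h | h
        · rw [if_pos h]; ring
        · rw [if_neg (by rw [← h]; exact lt_irrefl _)]
          have ht' : 2 * (t - x) = 2 * (x - a) := by rw [← h]; ring
          rw [ht']; ring
      rw [← hsplit, e1, e2, add_assoc]
    · -- x > (a+π)/2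
      rw [hW x, if_neg (not_lt.mpr hgt.le), hx2 ⟨hgt, hx.2⟩]
      congr 1
      rw [← intervalIntegral.integral_const_mul]
      apply intervalIntegral.integral_congr
      intro t ht
      rw [Set.uIcc_of_le hx.2.le] at ht
      have hnlt : ¬ (t > 2 * x - a) := by
        push_neg
        have : π < 2 * x - a := by linarith
        linarith [ht.2]
      show (2 : ℂ) * (qp t * ∫ τ in (0:ℝ)..(2 * (t - x)), qm τ) = Q x t * qp t
      rw [hQ, if_neg hnlt]
      ring
  refine ⟨main, ?_⟩
  -- Part 2: uniqueness
  intro qp' hqp' heq'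
  have hqp'int : IntegrableOn qp' (Set.Ioc a π) volume := hqp'.integrable one_le_two
  have hdint : IntegrableOn (fun t => qp' t - qp t) (Set.Ioc a π) volume := hqp'int.sub hqpint
  set C : ℝ := 2 * K with hCdef
  have hC0 : 0 ≤ C := by positivity
  set B : ℝ := ∫ t in Set.Ioc a π, ‖qp' t - qp t‖ with hBdef
  have hB0 : 0 ≤ B := by
    rw [hBdef]; exact setIntegral_nonneg measurableSet_Ioc fun _ _ => norm_nonneg _
  have hBle : ∀ x : ℝ, a ≤ x → (∫ t in Set.Ioc x π, ‖qp' t - qp t‖) ≤ B := by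
    intro x hx
    rw [hBdef]
    refine setIntegral_mono_set (hdint.norm) ?_ ?_
    · exact Filter.Eventually.of_forall fun _ => norm_nonneg _
    · exact (Set.Ioc_subset_Ioc_left hx).eventuallyLE
  clear_value C B
  -- the homogeneous Volterra equation for the difference
  have hd : ∀ᵐ x ∂volume.restrict (Set.Ioo a π),
      qp' x - qp x = - ∫ t in x..π, Q x t * (qp' t - qp t) := by
    filter_upwards [main, heq', ae_restrict_mem measurableSet_Ioo] with x hA hB' hxm
    have l1 : IntervalIntegrable (fun t => Q x t * qp t) volume x π :=
      (intervalIntegrable_iff_integrableOn_Ioc_of_le hxm.2.le).mpr (hprod qp hqpint x hxm.1.le)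
    have l2 : IntervalIntegrable (fun t => Q x t * qp' t) volume x π :=
      (intervalIntegrable_iff_integrableOn_Ioc_of_le hxm.2.le).mpr (hprod qp' hqp'int x hxm.1.le)
    have hsub : (∫ t in x..π, Q x t * (qp' t - qp t))
        = (∫ t in x..π, Q x t * qp' t) - ∫ t in x..π, Q x t * qp t := by
      rw [← intervalIntegral.integral_sub l2 l1]
      apply intervalIntegral.integral_congr
      intro t _
      ring
    rw [hsub]
    have h := hA.symm.trans hB'
    linear_combination -h
  -- basic norm estimate
  have hstep : ∀ x : ℝ, x ∈ Set.Ioo a π →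
      (qp' x - qp x = - ∫ t in x..π, Q x t * (qp' t - qp t)) →
      ‖qp' x - qp x‖ ≤ C * ∫ t in Set.Ioc x π, ‖qp' t - qp t‖ := by
    intro x hxm hx
    rw [hx, norm_neg]
    have hIoc : Set.Ioc x π ⊆ Set.Ioc a π := Set.Ioc_subset_Ioc_left hxm.1.le
    calc ‖∫ t in x..π, Q x t * (qp' t - qp t)‖
        ≤ ∫ t in Set.Ioc x π, ‖Q x t * (qp' t - qp t)‖ := by
          refine intervalIntegral.norm_integral_le_integral_norm_uIoc.trans_eq ?_
          rw [Set.uIoc_of_le hxm.2.le]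
      _ ≤ ∫ t in Set.Ioc x π, C * ‖qp' t - qp t‖ := by
          refine setIntegral_mono_on
            ((hprod _ hdint x hxm.1.le).norm) ((hdint.mono_set hIoc).norm.const_mul C)
            measurableSet_Ioc ?_
          intro t ht
          rw [norm_mul]
          exact mul_le_mul_of_nonneg_right (hQb x t hxm.1.le ht.1.le ht.2) (norm_nonneg _)
      _ = C * ∫ t in Set.Ioc x π, ‖qp' t - qp t‖ := integral_const_mul C _
  -- iteration
  have hiter : ∀ n : ℕ, ∀ᵐ x ∂volume.restrict (Set.Ioo a π),
      ‖qp' x - qp x‖ ≤ B * C * (C * (π - x)) ^ n / n.factorial := by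
    intro n
    induction n with
    | zero =>
      filter_upwards [hd, ae_restrict_mem measurableSet_Ioo] with x hx hxm
      simp only [pow_zero, Nat.factorial_zero, Nat.cast_one, mul_one, div_one]
      refine (hstep x hxm hx).trans ?_
      rw [mul_comm B C]
      exact mul_le_mul_of_nonneg_left (hBle x hxm.1.le) hC0
    | succ n ih =>
      have ih' := (ae_restrict_iff' measurableSet_Ioo).mp ih
      have hneπ : ∀ᵐ t : ℝ ∂volume, t ≠ π := by
        refine ae_iff.mpr ?_
        simpa using measure_singleton π
      filter_upwards [hd, ae_restrict_mem measurableSet_Ioo] with x hx hxm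
      have hxa : a < x := hxm.1
      have hxπ : x < π := hxm.2
      have step2 : (∫ t in Set.Ioc x π, ‖qp' t - qp t‖)
          ≤ ∫ t in Set.Ioc x π, B * C * (C * (π - t)) ^ n / n.factorial := by
        refine integral_mono_ae ((hdint.mono_set (Set.Ioc_subset_Ioc_left hxa.le)).norm) ?_ ?_
        · refine (Continuous.integrableOn_Ioc ?_)
          continuity
        · filter_upwards [ae_restrict_of_ae ih', ae_restrict_of_ae hneπ,
            ae_restrict_mem measurableSet_Ioc] with t h1' h2' h3'
          exact h1' ⟨hxa.trans h3'.1, lt_of_le_of_ne h3'.2 h2'⟩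
      have step3 : C * (∫ t in Set.Ioc x π, B * C * (C * (π - t)) ^ n / n.factorial)
          = B * C * (C * (π - x)) ^ (n + 1) / (n + 1).factorial := by
        have e : ∀ t : ℝ, B * C * (C * (π - t)) ^ n / n.factorial
            = (B * C * C ^ n / n.factorial) * (π - t) ^ n := by
          intro t; rw [mul_pow]; ring
        simp_rw [e]
        rw [integral_const_mul, ← intervalIntegral.integral_of_le hxπ.le]
        rw [intervalIntegral.integral_comp_sub_left (fun u => u ^ n) π, sub_self]
        rw [integral_pow]
        rw [zero_pow (Nat.succ_ne_zero n), sub_zero, Nat.factorial_succ, mul_pow]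
        push_cast
        have hn : (n.factorial : ℝ) ≠ 0 := by positivity
        have hn1 : ((n : ℝ) + 1) ≠ 0 := by positivity
        field_simp
        ring
      refine (hstep x hxm hx).trans ?_
      calc C * ∫ t in Set.Ioc x π, ‖qp' t - qp t‖
          ≤ C * ∫ t in Set.Ioc x π, B * C * (C * (π - t)) ^ n / n.factorial :=
            mul_le_mul_of_nonneg_left step2 hC0
        _ = B * C * (C * (π - x)) ^ (n + 1) / (n + 1).factorial := step3
  -- pass to the limit
  have hall := ae_all_iff.mpr hiter
  filter_upwards [hall, ae_restrict_mem measurableSet_Ioo] with x hx hxm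
  have htend : Filter.Tendsto (fun n : ℕ => B * C * (C * (π - x)) ^ n / n.factorial)
      Filter.atTop (nhds 0) := by
    have h0 := FloorSemiring.tendsto_pow_div_factorial_atTop (K := ℝ) (C * (π - x))
    have := h0.const_mul (B * C)
    simpa [mul_div_assoc] using this
  have hle : ‖qp' x - qp x‖ ≤ 0 := ge_of_tendsto' htend fun n => hx n
  have : qp' x - qp x = 0 := norm_le_zero_iff.mp hle
  exact sub_eq_zero.mp this
end

section
/- Let a ∈ [π/2, π), t ∈ [0, π), and q⁺ : (a,π) → ℂ integrable (zero elsewhere). Define q_t(x) = 0 for 0 < x < min(a, π−t) and q_t(x) = q⁺(x+t) for a < x < π−t. If y_t solves −y_t''(x) + q_t(x) y_t(x−a) = λ y_t(x) on (0, π−t) with y_t(0) = 0, y_t'(0) = 1 (where y_t(x−a) is interpreted as 0 for x < a), then y_t(x) = sin(ρx)/ρ + (1/2)∫_a^x (sin(ρ(x−τ))/ρ) (∫_{(a+τ)/2}^{x+(a−τ)/2} q_t(η)dη) dτ for 0 ≤ x ≤ π−t, where ρ² = λ. -/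
open MeasureTheory Real

lemma hasDerivAt_csin (b c : ℂ) (x : ℝ) :
    HasDerivAt (fun x : ℝ => Complex.sin (b + c * x)) (c * Complex.cos (b + c * x)) x := by
  have h : HasDerivAt (fun z : ℂ => Complex.sin (b + c * z))
      (c * Complex.cos (b + c * (x:ℂ))) (x : ℂ) := by
    have h1 : HasDerivAt (fun z : ℂ => b + c * z) c (x : ℂ) := by
      simpa using ((hasDerivAt_id (x:ℂ)).const_mul c).const_add b
    simpa [mul_comm, Function.comp_def] using (Complex.hasDerivAt_sin (b + c * x)).comp (x : ℂ) h1
  exact h.comp_ofReal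

lemma hasDerivAt_ccos (b c : ℂ) (x : ℝ) :
    HasDerivAt (fun x : ℝ => Complex.cos (b + c * x)) (-(c * Complex.sin (b + c * x))) x := by
  have h : HasDerivAt (fun z : ℂ => Complex.cos (b + c * z))
      (-(c * Complex.sin (b + c * (x:ℂ)))) (x : ℂ) := by
    have h1 : HasDerivAt (fun z : ℂ => b + c * z) c (x : ℂ) := by
      simpa using ((hasDerivAt_id (x:ℂ)).const_mul c).const_add b
    have := (Complex.hasDerivAt_cos (b + c * x)).comp (x : ℂ) h1
    simpa [mul_comm, Function.comp_def] using this
  exact h.comp_ofReal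

lemma prodToSum (p q : ℂ) :
    Complex.sin p * Complex.sin q = (Complex.cos (p - q) - Complex.cos (p + q)) / 2 := by
  have h := Complex.cos_sub_cos (p - q) (p + q)
  have h1 : (p - q + (p + q)) / 2 = p := by ring
  have h2 : (p - q - (p + q)) / 2 = -q := by ring
  rw [h1, h2, Complex.sin_neg] at h
  rw [h]; ring

lemma stepC (a X : ℝ) (haX : a ≤ X) (ρ : ℂ) (hρ : ρ ≠ 0) (qt : ℝ → ℂ) (hqt : Integrable qt) :
    (1/2 : ℂ) * ∫ τ in a..X, (Complex.sin (ρ * ((X:ℂ) - τ)) / ρ) *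
        ∫ η in ((a + τ) / 2)..(X + (a - τ) / 2), qt η
    = (ρ^2)⁻¹ * ∫ s in a..X, qt s *
        (Complex.sin (ρ * ((s:ℂ) - a)) * Complex.sin (ρ * ((X:ℂ) - s))) := by
  set S : Set ℝ := Set.Ioc a X with hS
  set K : ℝ → ℂ := fun τ => Complex.sin (ρ * ((X:ℂ) - τ)) / ρ with hK
  have hKcont : Continuous K := by
    apply Continuous.div_const
    exact Complex.continuous_sin.comp (by continuity)
  set χ : ℝ → ℝ → ℂ := fun τ η => if (a+τ)/2 ≤ η ∧ η ≤ X + (a-τ)/2 then 1 else 0 with hχ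
  -- step 1 : rewrite inner integral
  have step1 : ∀ τ ∈ S, (∫ η in ((a + τ) / 2)..(X + (a - τ) / 2), qt η)
      = ∫ η in S, qt η * χ τ η := by
    intro τ hτ
    obtain ⟨hτ1, hτ2⟩ := hτ
    set l := (a+τ)/2 with hl
    set u := X + (a-τ)/2 with hu
    have hlu : l ≤ u := by simp only [hl, hu]; linarith
    have hal : a ≤ l := by simp only [hl]; linarith
    have huX : u ≤ X := by simp only [hu]; linarith
    have e1 : (fun η => qt η * χ τ η) = Set.indicator (Set.Icc l u) qt := by
      funext η
      by_cases h : η ∈ Set.Icc l u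
      · rw [Set.indicator_of_mem h]
        have : (a+τ)/2 ≤ η ∧ η ≤ X + (a-τ)/2 := ⟨h.1, h.2⟩
        simp [hχ, this]
      · rw [Set.indicator_of_notMem h]
        have : ¬((a+τ)/2 ≤ η ∧ η ≤ X + (a-τ)/2) := by
          simpa [Set.mem_Icc, hl, hu] using h
        simp [hχ, this]
    rw [e1, setIntegral_indicator measurableSet_Icc]
    rw [intervalIntegral.integral_of_le hlu]
    apply setIntegral_congr_set
    rw [MeasureTheory.ae_eq_set]
    have hsub : Set.Ioc l u ⊆ S ∩ Set.Icc l u := by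
      intro η hη
      exact ⟨⟨lt_of_le_of_lt hal hη.1, le_trans hη.2 huX⟩, ⟨le_of_lt hη.1, hη.2⟩⟩
    have hdiff : (S ∩ Set.Icc l u) \ Set.Ioc l u ⊆ {l} := by
      intro η hη
      obtain ⟨⟨_, hIcc⟩, hni⟩ := hη
      have h1 : l ≤ η := hIcc.1
      have h2 : η ≤ u := hIcc.2
      have h3 : ¬ l < η := fun hlt => hni ⟨hlt, h2⟩
      exact le_antisymm (not_lt.mp h3) h1
    constructor
    · rw [Set.diff_eq_empty.mpr hsub]; simp
    · exact measure_mono_null hdiff (measure_singleton l)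
  -- arg rewriting
  have earg : ∀ τ:ℝ, ρ * ((X:ℂ) - τ) = ρ*X + (-ρ)*τ := fun τ => by ring
  -- indicator form of χ on the product
  set T : Set (ℝ × ℝ) := {p : ℝ × ℝ | (a+p.1)/2 ≤ p.2 ∧ p.2 ≤ X + (a-p.1)/2} with hT
  have hTmeas : MeasurableSet T := by
    have : T = {p : ℝ × ℝ | (a+p.1)/2 ≤ p.2} ∩ {p : ℝ × ℝ | p.2 ≤ X + (a-p.1)/2} := rfl
    rw [this]
    exact (measurableSet_le (by fun_prop) (by fun_prop)).inter
      (measurableSet_le (by fun_prop) (by fun_prop))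
  have hχind : ∀ p : ℝ × ℝ, χ p.1 p.2 = T.indicator (fun _ => (1:ℂ)) p := by
    intro p
    by_cases h : p ∈ T
    · have h' : (a+p.1)/2 ≤ p.2 ∧ p.2 ≤ X + (a-p.1)/2 := h
      simp [hχ, Set.indicator_of_mem h, h']
    · have h' : ¬((a+p.1)/2 ≤ p.2 ∧ p.2 ≤ X + (a-p.1)/2) := h
      simp [hχ, Set.indicator_of_notMem h, h']
  -- integrability on the product
  have hKμ : IntegrableOn K S := hKcont.integrableOn_Ioc
  have hqμ : IntegrableOn qt S := hqt.integrableOn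
  have hprod : Integrable (fun p : ℝ×ℝ => K p.1 * qt p.2)
      ((volume.restrict S).prod (volume.restrict S)) := hKμ.mul_prod hqμ
  have hbig : Integrable (fun p : ℝ×ℝ => χ p.1 p.2 * (K p.1 * qt p.2))
      ((volume.restrict S).prod (volume.restrict S)) := by
    apply hprod.bdd_mul (c := 1)
    · refine AEStronglyMeasurable.congr ?_ (Filter.Eventually.of_forall (fun p => (hχind p).symm))
      exact ((stronglyMeasurable_const.indicator hTmeas).aestronglyMeasurable)
    · refine Filter.Eventually.of_forall (fun p => ?_)
      rw [hχind p]
      by_cases h : p ∈ T <;> simp [Set.indicator_of_mem, Set.indicator_of_notMem, h]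
  -- swap
  have hswap := MeasureTheory.integral_integral_swap
    (f := fun τ η => χ τ η * (K τ * qt η)) hbig
  -- inner evaluation for fixed η
  have inner_eval : ∀ η ∈ S, (∫ τ in S, χ τ η * (K τ * qt η))
      = qt η * ((Complex.cos (ρ*((X:ℂ)+a-2*η)) - Complex.cos (ρ*((X:ℂ)-a))) / ρ^2) := by
    intro η hη
    obtain ⟨hη1, hη2⟩ := hη
    set m := min (2*η - a) (a + 2*X - 2*η) with hm
    have ham : a ≤ m := le_min (by linarith) (by linarith)
    have hmX : m ≤ X := by
      rw [hm]
      rcases le_total (2*η - a) (a + 2*X - 2*η) with h | h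
      · rw [min_eq_left h]; linarith
      · rw [min_eq_right h]; linarith
    have e2 : (fun τ => χ τ η * (K τ * qt η)) = fun τ => qt η * (Set.indicator (Set.Iic m) K τ) := by
      funext τ
      have hcond : ((a+τ)/2 ≤ η ∧ η ≤ X + (a-τ)/2) ↔ τ ≤ m := by
        rw [hm, le_min_iff]
        constructor
        · rintro ⟨h1, h2⟩; exact ⟨by linarith, by linarith⟩
        · rintro ⟨h1, h2⟩; exact ⟨by linarith, by linarith⟩
      by_cases h : τ ≤ m
      · rw [Set.indicator_of_mem (Set.mem_Iic.mpr h) K]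
        simp only [hχ, if_pos (hcond.mpr h)]
        ring
      · rw [Set.indicator_of_notMem (fun hc => h (Set.mem_Iic.mp hc)) K]
        simp only [hχ, if_neg (fun hc => h (hcond.mp hc))]
        ring
    rw [e2, MeasureTheory.integral_const_mul]
    congr 1
    rw [setIntegral_indicator measurableSet_Iic, hS, Set.Ioc_inter_Iic, min_eq_right hmX,
      ← intervalIntegral.integral_of_le ham]
    -- FTC
    have hG : ∀ τ:ℝ, HasDerivAt (fun τ:ℝ => Complex.cos (ρ*X + (-ρ)*(τ:ℂ)) / ρ^2) (K τ) τ := by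
      intro τ
      have h := (hasDerivAt_ccos (ρ*X) (-ρ) τ).div_const (ρ^2)
      refine h.congr_deriv ?_
      symm
      rw [hK]
      simp only [earg τ]
      field_simp
    have hint : IntervalIntegrable K volume a m := hKcont.intervalIntegrable a m
    rw [intervalIntegral.integral_eq_sub_of_hasDerivAt (fun τ _ => hG τ) hint]
    have hcosm : Complex.cos (ρ*X + (-ρ)*(m:ℂ)) = Complex.cos (ρ*((X:ℂ)+a-2*η)) := by
      rcases le_total (2*η - a) (a + 2*X - 2*η) with h | h
      · rw [hm, min_eq_left h]; congr 1; push_cast; ring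
      · rw [hm, min_eq_right h,
          show ρ*X + (-ρ)*(((a + 2*X - 2*η):ℝ):ℂ) = -(ρ*((X:ℂ)+a-2*η)) by push_cast; ring,
          Complex.cos_neg]
    rw [hcosm]
    congr 1
    congr 1
    push_cast; ring
  -- assembling
  rw [intervalIntegral.integral_of_le haX, intervalIntegral.integral_of_le haX]
  calc (1/2 : ℂ) * ∫ τ in S, (Complex.sin (ρ * ((X:ℂ) - τ)) / ρ) *
        ∫ η in ((a + τ) / 2)..(X + (a - τ) / 2), qt η
      = (1/2 : ℂ) * ∫ τ in S, ∫ η in S, χ τ η * (K τ * qt η) := by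
        congr 1
        apply setIntegral_congr_fun measurableSet_Ioc
        intro τ hτ
        show (Complex.sin (ρ * ((X:ℂ) - τ)) / ρ) *
            (∫ η in ((a + τ) / 2)..(X + (a - τ) / 2), qt η) = ∫ η in S, χ τ η * (K τ * qt η)
        rw [step1 τ hτ, ← MeasureTheory.integral_const_mul]
        apply setIntegral_congr_fun measurableSet_Ioc
        intro η hη
        simp only [hK]
        ring
    _ = (1/2 : ℂ) * ∫ η in S, ∫ τ in S, χ τ η * (K τ * qt η) := by rw [hswap]
    _ = (1/2 : ℂ) * ∫ η in S, qt η * ((Complex.cos (ρ*((X:ℂ)+a-2*η)) - Complex.cos (ρ*((X:ℂ)-a))) / ρ^2) := by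
        congr 1
        exact setIntegral_congr_fun measurableSet_Ioc inner_eval
    _ = (ρ^2)⁻¹ * ∫ s in S, qt s * (Complex.sin (ρ * ((s:ℂ) - a)) * Complex.sin (ρ * ((X:ℂ) - s))) := by
        rw [← MeasureTheory.integral_const_mul, ← MeasureTheory.integral_const_mul]
        apply setIntegral_congr_fun measurableSet_Ioc
        intro η hη
        dsimp only
        have hps := prodToSum (ρ*((η:ℂ) - a)) (ρ*((X:ℂ) - η))
        have e3 : ρ*((η:ℂ) - a) - ρ*((X:ℂ) - η) = -(ρ*((X:ℂ)+a-2*η)) := by ring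
        have e4 : ρ*((η:ℂ) - a) + ρ*((X:ℂ) - η) = ρ*((X:ℂ)-a) := by ring
        rw [e3, e4, Complex.cos_neg] at hps
        rw [hps]
        ring


/-- Lemmas 2–3 combined: the solution of the shifted Cauchy problem
`−y'' + q_t(x) y(x−a) = λ y`, `y(0)=0`, `y'(0)=1` on `(0, π−t)` with
`q_t(x) = 0` for `x < a` and `q_t(x) = q⁺(x+t)` for `a < x < π−t`, admits the
transformation-operator representation with kernel
`P(x,τ) = ½∫_{(a+τ)/2}^{x+(a−τ)/2} q_t(η) dη`. -/
theorem stmt_18 (a t : ℝ) (ha : a ∈ Set.Ico (π / 2) π) (ht : t ∈ Set.Ico 0 π)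
    (qp : ℝ → ℂ) (hqp : IntegrableOn qp (Set.Ioo a π))
    (hqp0 : ∀ x, x ∉ Set.Ioo a π → qp x = 0)
    (qt : ℝ → ℂ) (hqt : ∀ x, qt x = if x ≤ a then 0 else qp (x + t))
    (ρ : ℂ) (hρ : ρ ≠ 0)
    (y y' y'' : ℝ → ℂ)
    (hy1 : ∀ x, HasDerivAt y (y' x) x)
    (hy2 : ∀ x ∈ Set.Ioo 0 (π - t), HasDerivAt y' (y'' x) x)
    (heq : ∀ x ∈ Set.Ioo 0 (π - t),
      -y'' x + qt x * (if a ≤ x then y (x - a) else 0) = ρ ^ 2 * y x)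
    (h0 : y 0 = 0) (h0' : y' 0 = 1) :
    ∀ x ∈ Set.Icc 0 (π - t),
      y x = Complex.sin (ρ * x) / ρ +
        (1 / 2 : ℂ) * ∫ τ in a..x,
          (Complex.sin (ρ * ((x : ℂ) - τ)) / ρ) *
            ∫ η in ((a + τ) / 2)..(x + (a - τ) / 2), qt η := by
  obtain ⟨ha1, ha2⟩ := ha
  obtain ⟨ht1, ht2⟩ := ht
  have hπt : 0 < π - t := by linarith
  have ha0 : 0 < a := lt_of_lt_of_le (by positivity) ha1
  set a' : ℝ := min a (π - t) with ha'
  have ha'0 : 0 < a' := lt_min ha0 hπt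
  have ha'a : a' ≤ a := min_le_left _ _
  have ha'πt : a' ≤ π - t := min_le_right _ _
  -- integrability of qt
  have hqpint : Integrable qp := by
    have hqpz : qp = Set.indicator (Set.Ioo a π) qp := by
      funext x; by_cases h : x ∈ Set.Ioo a π
      · rw [Set.indicator_of_mem h]
      · rw [Set.indicator_of_notMem h, hqp0 x h]
    rw [hqpz]; exact (integrable_indicator_iff measurableSet_Ioo).mpr hqp
  have hqtint : Integrable qt := by
    have hqtind : qt = Set.indicator (Set.Ioi a) (fun x => qp (x + t)) := by
      funext x
      rw [hqt x]
      by_cases h : a < x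
      · rw [if_neg (not_le.mpr h), Set.indicator_of_mem (Set.mem_Ioi.mpr h)]
      · rw [if_pos (not_lt.mp h), Set.indicator_of_notMem (by simpa using not_lt.mp h)]
    rw [hqtind]
    exact (hqpint.comp_add_right t).indicator measurableSet_Ioi
  have hqtII : ∀ u v : ℝ, IntervalIntegrable qt volume u v := fun u v => hqtint.intervalIntegrable
  have hqt0 : ∀ x, x ≤ a → qt x = 0 := fun x hx => by rw [hqt x, if_pos hx]
  -- regularity
  have ycont : Continuous y := continuous_iff_continuousAt.mpr (fun x => (hy1 x).continuousAt)
  have y'cont : ContinuousOn y' (Set.Ioo 0 (π - t)) :=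
    fun x hx => ((hy2 x hx).continuousAt).continuousWithinAt
  -- Phase 2: y = sin(ρ x)/ρ on [0, a']
  set S0 : ℝ → ℂ := fun x => Complex.sin (ρ * x) / ρ with hS0
  have hS0cont : Continuous S0 := by
    apply Continuous.div_const
    exact Complex.continuous_sin.comp (continuous_const.mul Complex.continuous_ofReal)
  have hy''0 : ∀ x ∈ Set.Ioo 0 a', y'' x = -(ρ^2 * y x) := by
    intro x hx
    have hx' : x ∈ Set.Ioo 0 (π - t) := ⟨hx.1, lt_of_lt_of_le hx.2 ha'πt⟩
    have h := heq x hx'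
    rw [hqt0 x (le_of_lt (lt_of_lt_of_le hx.2 ha'a))] at h
    rw [zero_mul, add_zero] at h
    linear_combination -h
  set A : ℝ → ℂ := fun x => y' x * Complex.sin (ρ*x) - y x * (ρ * Complex.cos (ρ*x)) with hA
  set B : ℝ → ℂ := fun x => y' x * Complex.cos (ρ*x) + y x * (ρ * Complex.sin (ρ*x)) with hB
  have hsin' : ∀ x : ℝ, HasDerivAt (fun x : ℝ => Complex.sin (ρ*x)) (ρ * Complex.cos (ρ*x)) x := by
    intro x; simpa using hasDerivAt_csin 0 ρ x
  have hcos' : ∀ x : ℝ, HasDerivAt (fun x : ℝ => Complex.cos (ρ*x)) (-(ρ * Complex.sin (ρ*x))) x := by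
    intro x; simpa using hasDerivAt_ccos 0 ρ x
  have hAderiv : ∀ x ∈ Set.Ioo 0 a', HasDerivAt A 0 x := by
    intro x hx
    have hx' : x ∈ Set.Ioo 0 (π - t) := ⟨hx.1, lt_of_lt_of_le hx.2 ha'πt⟩
    have h1 := ((hy2 x hx').mul (hsin' x)).sub ((hy1 x).mul ((hcos' x).const_mul ρ))
    have h2 : y'' x * Complex.sin (ρ*x) + y' x * (ρ * Complex.cos (ρ*x)) -
        (y' x * (ρ * Complex.cos (ρ*x)) + y x * (ρ * -(ρ * Complex.sin (ρ*x)))) = 0 := by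
      rw [hy''0 x hx]; ring
    rw [h2] at h1; exact h1
  have hBderiv : ∀ x ∈ Set.Ioo 0 a', HasDerivAt B 0 x := by
    intro x hx
    have hx' : x ∈ Set.Ioo 0 (π - t) := ⟨hx.1, lt_of_lt_of_le hx.2 ha'πt⟩
    have h1 := ((hy2 x hx').mul (hcos' x)).add ((hy1 x).mul ((hsin' x).const_mul ρ))
    have h2 : y'' x * Complex.cos (ρ*x) + y' x * -(ρ * Complex.sin (ρ*x)) +
        (y' x * (ρ * Complex.sin (ρ*x)) + y x * (ρ * (ρ * Complex.cos (ρ*x)))) = 0 := by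
      rw [hy''0 x hx]; ring
    rw [h2] at h1; exact h1
  have hmid : a'/2 ∈ Set.Ioo 0 a' := ⟨by linarith, by linarith⟩
  have constF : ∀ (F : ℝ → ℂ), (∀ x ∈ Set.Ioo 0 a', HasDerivAt F 0 x) →
      ∀ x ∈ Set.Ioo 0 a', F x = F (a'/2) := by
    intro F hF x hx
    have hsub : Set.uIcc x (a'/2) ⊆ Set.Ioo 0 a' := by
      intro τ hτ
      rcases Set.mem_uIcc.mp hτ with ⟨h1, h2⟩ | ⟨h1, h2⟩
      · exact ⟨lt_of_lt_of_le hx.1 h1, lt_of_le_of_lt h2 hmid.2⟩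
      · exact ⟨lt_of_lt_of_le hmid.1 h1, lt_of_le_of_lt h2 hx.2⟩
    have h := intervalIntegral.integral_eq_sub_of_hasDerivAt
      (f := F) (f' := fun _ => (0:ℂ)) (fun τ hτ => hF τ (hsub hτ)) intervalIntegrable_const
    simp only [intervalIntegral.integral_zero] at h
    linear_combination h
  set CA : ℂ := A (a'/2) with hCA
  set CB : ℂ := B (a'/2) with hCB
  have hyform : ∀ x ∈ Set.Ioo 0 a', y x = (CB * Complex.sin (ρ*x) - CA * Complex.cos (ρ*x)) / ρ := by
    intro x hx
    have hA' := constF A hAderiv x hx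
    have hB' := constF B hBderiv x hx
    have pyth := Complex.sin_sq_add_cos_sq (ρ*x)
    rw [hCA, hCB, ← hA', ← hB', hA, hB]
    field_simp
    linear_combination (-(y x) * ρ) * pyth
  -- CA = 0
  have hCA0 : CA = 0 := by
    have hne : (nhdsWithin (0:ℝ) (Set.Ioo 0 a')).NeBot := by
      apply mem_closure_iff_nhdsWithin_neBot.mp
      rw [closure_Ioo (ne_of_lt ha'0)]
      exact ⟨le_refl 0, le_of_lt ha'0⟩
    have hlim1 : Filter.Tendsto y (nhdsWithin (0:ℝ) (Set.Ioo 0 a')) (nhds 0) := by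
      have h1 : Filter.Tendsto y (nhdsWithin (0:ℝ) (Set.Ioo 0 a')) (nhds (y 0)) :=
        (ycont.tendsto 0).mono_left nhdsWithin_le_nhds
      rwa [h0] at h1
    have hcontW : Continuous (fun x:ℝ => (CB * Complex.sin (ρ*x) - CA * Complex.cos (ρ*x)) / ρ) := by
      apply Continuous.div_const
      exact (continuous_const.mul (Complex.continuous_sin.comp
        (continuous_const.mul Complex.continuous_ofReal))).sub
        (continuous_const.mul (Complex.continuous_cos.comp
        (continuous_const.mul Complex.continuous_ofReal)))
    have hlim2 : Filter.Tendsto (fun x:ℝ => (CB * Complex.sin (ρ*x) - CA * Complex.cos (ρ*x)) / ρ)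
        (nhdsWithin (0:ℝ) (Set.Ioo 0 a')) (nhds ((CB * Complex.sin (ρ*0) - CA * Complex.cos (ρ*0)) / ρ)) := by
      exact ((hcontW.tendsto 0).mono_left nhdsWithin_le_nhds)
    have hlim1' : Filter.Tendsto (fun x:ℝ => (CB * Complex.sin (ρ*x) - CA * Complex.cos (ρ*x)) / ρ)
        (nhdsWithin (0:ℝ) (Set.Ioo 0 a')) (nhds 0) := by
      apply hlim1.congr'
      filter_upwards [self_mem_nhdsWithin] with x hx
      exact hyform x hx
    have := tendsto_nhds_unique hlim1' hlim2
    simp only [Complex.ofReal_zero, mul_zero, Complex.sin_zero, Complex.cos_zero, mul_one,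
      mul_zero, zero_sub] at this
    field_simp at this
    linear_combination this
  -- CB = 1
  have hCB1 : CB = 1 := by
    have hw0 : HasDerivAt (fun x:ℝ => CB * Complex.sin (ρ*x) / ρ) CB 0 := by
      have h1 := ((hsin' 0).const_mul CB).div_const ρ
      have h2 : CB * (ρ * Complex.cos (ρ*((0:ℝ):ℂ))) / ρ = CB := by
        push_cast
        rw [mul_zero, Complex.cos_zero]
        field_simp
      rwa [h2] at h1
    have hww : HasDerivWithinAt (fun x:ℝ => CB * Complex.sin (ρ*x) / ρ) CB (Set.Ici 0) 0 :=
      hw0.hasDerivWithinAt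
    have hev : y =ᶠ[nhdsWithin (0:ℝ) (Set.Ici 0)] (fun x:ℝ => CB * Complex.sin (ρ*x) / ρ) := by
      have hmem : Set.Iio a' ∈ nhds (0:ℝ) := Iio_mem_nhds ha'0
      filter_upwards [mem_nhdsWithin_of_mem_nhds hmem, self_mem_nhdsWithin] with x hx1 hx2
      rcases eq_or_lt_of_le (Set.mem_Ici.mp hx2) with h | h
      · rw [← h, h0]
        simp
      · rw [hyform x ⟨h, hx1⟩, hCA0]
        ring
    have hy0s : y 0 = CB * Complex.sin (ρ*((0:ℝ):ℂ)) / ρ := by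
      rw [h0]; push_cast; rw [mul_zero, Complex.sin_zero]; simp
    have hyw : HasDerivWithinAt y CB (Set.Ici 0) 0 :=
      hww.congr_of_eventuallyEq hev hy0s
    have hy1w : HasDerivWithinAt y 1 (Set.Ici 0) 0 := by
      have h1 := (hy1 0).hasDerivWithinAt (s := Set.Ici 0)
      rwa [h0'] at h1
    have hu : UniqueDiffWithinAt ℝ (Set.Ici (0:ℝ)) 0 := (uniqueDiffOn_Ici 0) 0 Set.self_mem_Ici
    rw [← hyw.derivWithin hu]
    exact hy1w.derivWithin hu
  -- Phase 2 conclusion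
  have phase2 : Set.EqOn y S0 (Set.Icc 0 a') := by
    have h1 : Set.EqOn y S0 (Set.Ioo 0 a') := by
      intro x hx
      rw [hyform x hx, hCA0, hCB1, hS0]
      simp only [one_mul, mul_zero, zero_mul, sub_zero]
    have h2 := h1.closure ycont hS0cont
    rwa [closure_Ioo (ne_of_lt ha'0)] at h2
  -- The VOP function V
  set V : ℝ → ℂ := fun X => Complex.sin (ρ*X)/ρ +
    (ρ^2)⁻¹ * ∫ s in a..X, qt s *
      (Complex.sin (ρ*((s:ℂ)-a)) * Complex.sin (ρ*((X:ℂ)-s))) with hV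
  have hsinacont : Continuous (fun s:ℝ => Complex.sin (ρ*((s:ℂ)-a))) :=
    Complex.continuous_sin.comp (continuous_const.mul (Complex.continuous_ofReal.sub continuous_const))
  have hsincont : Continuous (fun s:ℝ => Complex.sin (ρ*(s:ℂ))) :=
    Complex.continuous_sin.comp (continuous_const.mul Complex.continuous_ofReal)
  have hcoscont : Continuous (fun s:ℝ => Complex.cos (ρ*(s:ℂ))) :=
    Complex.continuous_cos.comp (continuous_const.mul Complex.continuous_ofReal)
  set A1 : ℝ → ℂ := fun X => ∫ s in a..X, qt s *
      (Complex.sin (ρ*((s:ℂ)-a)) * Complex.cos (ρ*s)) with hA1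
  set B1 : ℝ → ℂ := fun X => ∫ s in a..X, qt s *
      (Complex.sin (ρ*((s:ℂ)-a)) * Complex.sin (ρ*s)) with hB1
  have hA1cont : Continuous A1 :=
    intervalIntegral.continuous_primitive
      (fun u v => (hqtII u v).mul_continuousOn (hsinacont.mul hcoscont).continuousOn) a
  have hB1cont : Continuous B1 :=
    intervalIntegral.continuous_primitive
      (fun u v => (hqtII u v).mul_continuousOn (hsinacont.mul hsincont).continuousOn) a
  have hVexp : ∀ X:ℝ, V X = Complex.sin (ρ*X)/ρ +
      (ρ^2)⁻¹ * (Complex.sin (ρ*X) * A1 X - Complex.cos (ρ*X) * B1 X) := by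
    intro X
    simp only [hV, hA1, hB1]
    congr 1
    congr 1
    rw [← intervalIntegral.integral_const_mul, ← intervalIntegral.integral_const_mul,
      ← intervalIntegral.integral_sub (f := fun x => Complex.sin (ρ*X) * (qt x * (Complex.sin (ρ*((x:ℂ)-a)) * Complex.cos (ρ*x))))
        (g := fun x => Complex.cos (ρ*X) * (qt x * (Complex.sin (ρ*((x:ℂ)-a)) * Complex.sin (ρ*x))))
        (((hqtII a X).mul_continuousOn (hsinacont.mul hcoscont).continuousOn).const_mul _)
        (((hqtII a X).mul_continuousOn (hsinacont.mul hsincont).continuousOn).const_mul _)]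
    apply intervalIntegral.integral_congr
    intro s hs
    simp only
    rw [show ρ*((X:ℂ)-s) = ρ*(X:ℂ) - ρ*(s:ℂ) by ring, Complex.sin_sub]
    ring
  have hVcont : Continuous V := by
    have hVe : V = fun X : ℝ => Complex.sin (ρ*X)/ρ +
        (ρ^2)⁻¹ * (Complex.sin (ρ*X) * A1 X - Complex.cos (ρ*X) * B1 X) := funext hVexp
    rw [hVe]
    exact ((hsincont.div_const ρ).add (continuous_const.mul
      ((hsincont.mul hA1cont).sub (hcoscont.mul hB1cont))))
  -- vanishing for X ≤ a
  have hVsmall : ∀ X : ℝ, X ≤ a → V X = Complex.sin (ρ*X)/ρ := by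
    intro X hX
    have h1 : (∫ s in a..X, qt s *
        (Complex.sin (ρ*((s:ℂ)-a)) * Complex.sin (ρ*((X:ℂ)-s)))) = ∫ s in a..X, (0:ℂ) := by
      apply intervalIntegral.integral_congr
      intro s hs
      dsimp only
      rw [Set.uIcc_of_ge hX] at hs
      rw [hqt0 s hs.2, zero_mul]
    rw [hV]
    simp only
    rw [h1, intervalIntegral.integral_zero, mul_zero, add_zero]
  have hqtIic : ∀ u v : ℝ, u ≤ a → v ≤ a → (∫ η in u..v, qt η) = 0 := by
    intro u v hu hv
    have h1 : (∫ η in u..v, qt η) = ∫ η in u..v, (0:ℂ) := by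
      apply intervalIntegral.integral_congr
      intro η hη
      apply hqt0
      rcases Set.mem_uIcc.mp hη with ⟨_, h2⟩ | ⟨_, h2⟩
      · exact le_trans h2 hv
      · exact le_trans h2 hu
    rw [h1, intervalIntegral.integral_zero]
  have hRsmall : ∀ X : ℝ, X ≤ a →
      (∫ τ in a..X, (Complex.sin (ρ*((X:ℂ)-τ))/ρ) *
        ∫ η in ((a+τ)/2)..(X+(a-τ)/2), qt η) = 0 := by
    intro X hX
    have h1 : (∫ τ in a..X, (Complex.sin (ρ*((X:ℂ)-τ))/ρ) *
        ∫ η in ((a+τ)/2)..(X+(a-τ)/2), qt η) = ∫ τ in a..X, (0:ℂ) := by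
      apply intervalIntegral.integral_congr
      intro τ hτ
      dsimp only
      rw [Set.uIcc_of_ge hX] at hτ
      obtain ⟨hτ1, hτ2⟩ := hτ
      rw [hqtIic _ _ (by linarith) (by linarith), mul_zero]
    rw [h1, intervalIntegral.integral_zero]
  -- main interior identity
  have main_interior : Set.EqOn y V (Set.Ioo 0 (π - t)) := by
    intro X hX
    rcases le_or_gt X a with hXa | haX
    · have hXa' : X ∈ Set.Icc 0 a' := ⟨le_of_lt hX.1, le_min hXa (le_of_lt hX.2)⟩
      rw [phase2 hXa', hVsmall X hXa, hS0]
    · -- a < X < π − t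
      set c : ℝ := a/2 with hc
      have hc0 : 0 < c := by positivity
      have hca : c < a := by linarith
      have hcX : c < X := lt_trans hca haX
      have hcIoo : c ∈ Set.Ioo 0 a' := ⟨hc0, lt_min hca (by linarith [hX.2])⟩
      have hyc : y c = Complex.sin (ρ*(c:ℂ))/ρ := phase2 ⟨le_of_lt hc0, le_of_lt hcIoo.2⟩
      have hyc' : y' c = ρ * Complex.cos (ρ*(c:ℂ)) / ρ := by
        have hmem : Set.Ioo (0:ℝ) a' ∈ nhds c := Ioo_mem_nhds hcIoo.1 hcIoo.2
        have hev : y =ᶠ[nhds c] S0 := by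
          filter_upwards [hmem] with z hz
          exact phase2 ⟨le_of_lt hz.1, le_of_lt hz.2⟩
        have hS0d : HasDerivAt S0 (ρ * Complex.cos (ρ*(c:ℂ)) / ρ) c := (hsin' c).div_const ρ
        exact (hy1 c).unique (hS0d.congr_of_eventuallyEq hev)
      set K0 : ℝ → ℂ := fun x => Complex.sin (ρ*(X:ℂ) + (-ρ)*x)/ρ with hK0
      set CC : ℝ → ℂ := fun x => Complex.cos (ρ*(X:ℂ) + (-ρ)*x) with hCC
      have hK0cont : Continuous K0 := by
        apply Continuous.div_const
        exact Complex.continuous_sin.comp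
          (continuous_const.add (continuous_const.mul Complex.continuous_ofReal))
      have hCCcont : Continuous CC :=
        Complex.continuous_cos.comp
          (continuous_const.add (continuous_const.mul Complex.continuous_ofReal))
      set D : ℝ → ℂ := fun x => if a ≤ x then y (x - a) else 0 with hD
      have hDeq : D = fun x => y (max x a - a) := by
        funext x
        simp only [hD]
        by_cases h : a ≤ x
        · rw [if_pos h, max_eq_left h]
        · rw [if_neg h, max_eq_right (le_of_not_ge h), sub_self, h0]
      have hDcont : Continuous D := by
        rw [hDeq]
        exact ycont.comp ((continuous_id.max continuous_const).sub continuous_const)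
      set g : ℝ → ℂ := fun x => y' x * K0 x + y x * CC x with hg
      have hsubset : Set.Icc c X ⊆ Set.Ioo 0 (π - t) :=
        fun z hz => ⟨lt_of_lt_of_le hc0 hz.1, lt_of_le_of_lt hz.2 hX.2⟩
      have hgcont : ContinuousOn g (Set.Icc c X) :=
        ((y'cont.mono hsubset).mul hK0cont.continuousOn).add
          (ycont.continuousOn.mul hCCcont.continuousOn)
      have hK0d : ∀ x : ℝ, HasDerivAt K0 ((-ρ) * Complex.cos (ρ*(X:ℂ) + (-ρ)*x) / ρ) x :=
        fun x => (hasDerivAt_csin (ρ*X) (-ρ) x).div_const ρ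
      have hCCd : ∀ x : ℝ, HasDerivAt CC (-((-ρ) * Complex.sin (ρ*(X:ℂ) + (-ρ)*x))) x :=
        fun x => hasDerivAt_ccos (ρ*X) (-ρ) x
      have hgd : ∀ x ∈ Set.Ioo c X, HasDerivAt g (qt x * D x * K0 x) x := by
        intro x hx
        have hx' : x ∈ Set.Ioo 0 (π - t) := ⟨lt_trans hc0 hx.1, lt_trans hx.2 hX.2⟩
        have h1 := ((hy2 x hx').mul (hK0d x)).add ((hy1 x).mul (hCCd x))
        have hyx'' : y'' x = qt x * D x - ρ^2 * y x := by
          have h := heq x hx'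
          simp only [hD]
          linear_combination -h
        have h2 : y'' x * K0 x + y' x * ((-ρ) * Complex.cos (ρ*(X:ℂ) + (-ρ)*x) / ρ) +
            (y' x * CC x + y x * -((-ρ) * Complex.sin (ρ*(X:ℂ) + (-ρ)*x))) =
            qt x * D x * K0 x := by
          rw [hyx'']
          simp only [hK0, hCC]
          field_simp
          ring
        rw [h2] at h1
        exact h1
      have hfII : ∀ u v : ℝ, IntervalIntegrable (fun x => qt x * D x * K0 x) volume u v := by
        intro u v
        exact ((hqtII u v).mul_continuousOn hDcont.continuousOn).mul_continuousOn
          hK0cont.continuousOn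
      have key := intervalIntegral.integral_eq_sub_of_hasDerivAt_of_le (le_of_lt hcX)
        hgcont hgd (hfII c X)
      have hgX : g X = y X := by
        simp only [hg, hK0, hCC]
        rw [show ρ*(X:ℂ) + (-ρ)*(X:ℂ) = 0 by ring, Complex.sin_zero, Complex.cos_zero]
        simp
      have hgc : g c = Complex.sin (ρ*(X:ℂ))/ρ := by
        simp only [hg, hK0, hCC]
        rw [hyc', hyc]
        have hsplit : Complex.sin (ρ*(X:ℂ)) =
            Complex.sin (ρ*(X:ℂ) + (-ρ)*(c:ℂ)) * Complex.cos (ρ*(c:ℂ)) +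
            Complex.cos (ρ*(X:ℂ) + (-ρ)*(c:ℂ)) * Complex.sin (ρ*(c:ℂ)) := by
          rw [← Complex.sin_add]
          congr 1
          ring
        rw [hsplit]
        field_simp
      have hsplitint : (∫ x in c..a, qt x * D x * K0 x) + (∫ x in a..X, qt x * D x * K0 x)
          = ∫ x in c..X, qt x * D x * K0 x :=
        intervalIntegral.integral_add_adjacent_intervals (hfII c a) (hfII a X)
      have hca0 : (∫ x in c..a, qt x * D x * K0 x) = 0 := by
        have h1 : (∫ x in c..a, qt x * D x * K0 x) = ∫ x in c..a, (0:ℂ) := by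
          apply intervalIntegral.integral_congr
          intro x hx
          dsimp only
          rw [Set.uIcc_of_le (le_of_lt hca)] at hx
          rw [hqt0 x hx.2, zero_mul, zero_mul]
        rw [h1, intervalIntegral.integral_zero]
      have haXint : (∫ x in a..X, qt x * D x * K0 x) = (ρ^2)⁻¹ *
          ∫ s in a..X, qt s * (Complex.sin (ρ*((s:ℂ)-a)) * Complex.sin (ρ*((X:ℂ)-s))) := by
        rw [← intervalIntegral.integral_const_mul]
        apply intervalIntegral.integral_congr
        intro s hs
        dsimp only
        rw [Set.uIcc_of_le (le_of_lt haX)] at hs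
        obtain ⟨hs1, hs2⟩ := hs
        have hsa' : s - a ∈ Set.Icc 0 a' := by
          have hx2 : X < π - t := hX.2
          have h1 : X - a < a := by linarith
          have h2 : X - a < π - t := by linarith
          have hXa' : X - a < a' := by
            rw [ha']
            exact lt_min h1 h2
          exact ⟨by linarith, by linarith⟩
        have hDs : D s = Complex.sin (ρ*((s:ℂ)-a))/ρ := by
          simp only [hD]
          rw [if_pos hs1, phase2 hsa', hS0]
          push_cast
          ring_nf
        rw [hDs]
        simp only [hK0]
        rw [show ρ*(X:ℂ) + (-ρ)*(s:ℂ) = ρ*((X:ℂ) - s) by ring]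
        field_simp
      have hyXV : y X = Complex.sin (ρ*(X:ℂ))/ρ + ∫ x in c..X, qt x * D x * K0 x := by
        rw [key, hgX, hgc]
        ring
      rw [hyXV, ← hsplitint, hca0, zero_add, haXint, hV]
  -- conclude on the closed interval
  have hEqIcc : Set.EqOn y V (Set.Icc 0 (π - t)) := by
    have h2 := main_interior.closure ycont hVcont
    rwa [closure_Ioo (ne_of_lt hπt)] at h2
  intro x hx
  rw [hEqIcc hx]
  rcases le_or_gt x a with hxa | hax
  · rw [hVsmall x hxa, hRsmall x hxa, mul_zero, add_zero]
  · rw [stepC a x (le_of_lt hax) ρ hρ qt hqtint, hV]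
end
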